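/- Let 0 ≤ t ≤ 1 and let (T_n)_{n≥0} be a generalized Aluthge iteration sequence for T with parameter t. Then there exists a real number s with r(T) ≤ s ≤ ‖T‖ such that the sequence of operator norms ‖T_n‖ = ‖Δ_t^{(n)}(T)‖ converges to s as n → ∞. -/

import Mathlib

/-!
Write `T_n = V P` with `P = |T_n|`. Since `V` is a contraction and `‖P ^ r‖ ≤ ‖P‖ ^ r`, one step
gives `‖P ^ t * V * P ^ (1 - t)‖ ≤ ‖P‖ = ‖T_n‖`. Since `σ(xy) \ {0} = σ(yx) \ {0}`, taking
`x = P ^ t` and `y = V * P ^ (1 - t)` (so that `y * x = V * P = T_n`) shows that the step also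
preserves the spectral radius. Hence `‖T_n‖` is nonincreasing and bounded below by
`r(T_n) = r(T)`, so it converges to its infimum.
-/

open Filter Topology ENNReal

theorem spectralRadius_mul_comm {𝕜 A : Type*} [NormedField 𝕜] [Ring A] [Algebra 𝕜 A] (a b : A) :
    spectralRadius 𝕜 (a * b) = spectralRadius 𝕜 (b * a) := by
  suffices h : ∀ a b : A, spectralRadius 𝕜 (a * b) ≤ spectralRadius 𝕜 (b * a) from
    (h a b).antisymm (h b a)
  refine fun a b => iSup₂_le fun k hk => ?_
  rcases eq_or_ne k 0 with rfl | hk0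
  · simp
  · have hk' : k ∈ spectrum 𝕜 (b * a) \ {0} :=
      spectrum.nonzero_mul_comm (𝕜 := 𝕜) a b ▸ ⟨hk, hk0⟩
    exact le_iSup₂ (f := fun k (_ : k ∈ spectrum 𝕜 (b * a)) => (‖k‖₊ : ℝ≥0∞)) k hk'.1

section CStarRing
variable {A : Type*} [NormedRing A] [StarRing A] [CStarRing A]

theorem CStarRing.norm_one_le : ‖(1 : A)‖ ≤ 1 := by
  nontriviality A
  exact CStarRing.norm_one.le

theorem norm_le_one_of_norm_star_mul_self_le_one {v : A} (h : ‖star v * v‖ ≤ 1) : ‖v‖ ≤ 1 := by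
  rw [CStarRing.norm_star_mul_self] at h
  nlinarith [norm_nonneg v]

end CStarRing

section CStarAlgebra
variable {A : Type*} [CStarAlgebra A]

theorem CStarRing.spectralRadius_le_nnnorm (a : A) : spectralRadius ℂ a ≤ ‖a‖₊ := by
  nontriviality A
  exact spectrum.spectralRadius_le_nnnorm a

theorem exists_tendsto_norm_of_norm_succ_le {a : ℕ → A} (hnorm : ∀ n, ‖a (n + 1)‖ ≤ ‖a n‖)
    (hrad : ∀ n, spectralRadius ℂ (a (n + 1)) = spectralRadius ℂ (a n)) :
    ∃ s : ℝ, spectralRadius ℂ (a 0) ≤ ENNReal.ofReal s ∧ s ≤ ‖a 0‖ ∧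
      Tendsto (fun n => ‖a n‖) atTop (𝓝 s) := by
  have hanti : Antitone fun n => ‖a n‖ := antitone_nat_of_succ_le hnorm
  have hlim := tendsto_atTop_ciInf hanti ⟨0, by rintro _ ⟨n, rfl⟩; exact norm_nonneg _⟩
  have hrad_eq : ∀ n, spectralRadius ℂ (a n) = spectralRadius ℂ (a 0) := by
    intro n
    induction n with
    | zero => rfl
    | succ n ih => rw [hrad n, ih]
  refine ⟨_, ge_of_tendsto' (ENNReal.tendsto_ofReal hlim) fun n => ?_, hanti.le_of_tendsto hlim 0,
    hlim⟩
  rw [← hrad_eq n, ofReal_norm, enorm_eq_nnnorm]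
  exact CStarRing.spectralRadius_le_nnnorm (a n)

variable [PartialOrder A] [StarOrderedRing A]

namespace CFC

theorem rpow_add_of_nonneg (p : A) {x y : ℝ} (hx : 0 ≤ x) (hy : 0 ≤ y) :
    p ^ (x + y) = p ^ x * p ^ y := by
  simp only [rpow_def]
  rw [← cfc_mul _ _ p (NNReal.continuous_rpow_const hx).continuousOn
    (NNReal.continuous_rpow_const hy).continuousOn]
  exact cfc_congr fun z _ => NNReal.rpow_add_of_nonneg z hx hy

theorem norm_rpow_le (p : A) {r : ℝ} (hr : 0 ≤ r) (hp : 0 ≤ p := by cfc_tac) :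
    ‖p ^ r‖ ≤ ‖p‖ ^ r := by
  rcases hr.eq_or_lt with rfl | hr
  · simpa [rpow_zero p hp] using CStarRing.norm_one_le
  · exact (norm_rpow p hr hp).le

end CFC

theorem norm_rpow_mul_mul_rpow_le {p : A} (hp : 0 ≤ p) (v : A) {t : ℝ} (ht0 : 0 ≤ t)
    (ht1 : t ≤ 1) : ‖p ^ t * v * p ^ (1 - t)‖ ≤ ‖v‖ * ‖p‖ := by
  calc ‖p ^ t * v * p ^ (1 - t)‖ ≤ ‖p ^ t‖ * ‖v‖ * ‖p ^ (1 - t)‖ := norm_mul₃_le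
    _ ≤ ‖p‖ ^ t * ‖v‖ * ‖p‖ ^ (1 - t) := by
      gcongr
      exacts [CFC.norm_rpow_le p ht0, CFC.norm_rpow_le p (sub_nonneg.mpr ht1)]
    _ = ‖v‖ * ‖p‖ := by
      rw [mul_right_comm, ← Real.rpow_add_of_nonneg (norm_nonneg p) ht0 (sub_nonneg.mpr ht1),
        add_sub_cancel, Real.rpow_one, mul_comm]

theorem spectralRadius_rpow_mul_mul_rpow {p : A} (hp : 0 ≤ p) (v : A) {t : ℝ} (ht0 : 0 ≤ t)
    (ht1 : t ≤ 1) : spectralRadius ℂ (p ^ t * v * p ^ (1 - t)) = spectralRadius ℂ (v * p) := by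
  rw [mul_assoc, spectralRadius_mul_comm, mul_assoc,
    ← CFC.rpow_add_of_nonneg p (sub_nonneg.mpr ht1) ht0, sub_add_cancel, CFC.rpow_one p]

theorem norm_eq_of_mul_self_eq_star_mul_self {p a : A} (hp : 0 ≤ p) (h : p * p = star a * a) :
    ‖p‖ = ‖a‖ := by
  rw [← mul_self_inj (norm_nonneg p) (norm_nonneg a), ← CStarRing.norm_star_mul_self,
    hp.isSelfAdjoint.star_eq, h, CStarRing.norm_star_mul_self]

end CStarAlgebra

/-- For `0 ≤ t ≤ 1`, the norms of the iterates of the generalized Aluthge transform of a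
single operator `T` converge to some `s` with `r(T) ≤ s ≤ ‖T‖`. -/
theorem aluthge_iteration_norms_converge
    {t : ℝ} (ht0 : 0 ≤ t) (ht1 : t ≤ 1)
    {H : Type*} [NormedAddCommGroup H] [InnerProductSpace ℂ H] [CompleteSpace H]
    (T : H →L[ℂ] H) (Tseq : ℕ → H →L[ℂ] H) (h0 : Tseq 0 = T)
    (hstep : ∀ n, ∃ Pn Vn : H →L[ℂ] H, 0 ≤ Pn ∧ Pn * Pn = star (Tseq n) * Tseq n ∧
      Tseq n = Vn * Pn ∧
      star Vn * Vn =
        ((LinearMap.ker (Pn : H →ₗ[ℂ] H))ᗮ).subtypeL.comp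
          (Submodule.orthogonalProjectionOnto (LinearMap.ker (Pn : H →ₗ[ℂ] H))ᗮ) ∧
      Tseq (n + 1) = CFC.rpow Pn t * Vn * CFC.rpow Pn (1 - t)) :
    ∃ s : ℝ, spectralRadius ℂ T ≤ ENNReal.ofReal s ∧ s ≤ ‖T‖ ∧
      Tendsto (fun n => ‖Tseq n‖) atTop (𝓝 s) := by
  subst h0
  have haluthge_step : ∀ n, ‖Tseq (n + 1)‖ ≤ ‖Tseq n‖ ∧
      spectralRadius ℂ (Tseq (n + 1)) = spectralRadius ℂ (Tseq n) := by
    intro n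
    obtain ⟨P, V, hP, hPP, hVP, hVV, hnext⟩ := hstep n
    have hV : ‖V‖ ≤ 1 :=
      norm_le_one_of_norm_star_mul_self_le_one (hVV ▸ Submodule.starProjection_norm_le _)
    simp only [hnext, CFC.rpow_eq_pow]
    refine ⟨?_, by rw [spectralRadius_rpow_mul_mul_rpow hP V ht0 ht1, hVP]⟩
    calc ‖P ^ t * V * P ^ (1 - t)‖ ≤ ‖V‖ * ‖P‖ := norm_rpow_mul_mul_rpow_le hP V ht0 ht1
      _ ≤ 1 * ‖P‖ := by gcongr
      _ = ‖Tseq n‖ := by rw [one_mul, norm_eq_of_mul_self_eq_star_mul_self hP hPP]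
  exact exists_tendsto_norm_of_norm_succ_le (fun n => (haluthge_step n).1)
    fun n => (haluthge_step n).2
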